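/- Every element of the operadic James construction F_*(M) on a pointed symmetric sequence M admits a unique reduced representative: a treewise tuple (x_v)_{v∈V(t)} ∈ ∏_v M(r_v) such that x_v ≠ * for every unary vertex v (r_v = 1). -/

import Mathlib

/-!
STATEMENT 11: every element of the operadic James construction `F_*(M)` on a
pointed symmetric sequence `M` admits a unique reduced representative: a
treewise tuple `(x_v)_{v ∈ V(t)}` such that `x_v ≠ *` for every unary vertex.

`F(M)` is realized by treewise labelled tuples, and `F_*(M)` is its quotient
by the relation generated by the deletion of unary vertices labelled by the
basepoint `* ∈ M(1)`.
-/

/-- Directed rooted trees (unary vertices allowed). -/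
inductive OpTree : Type
  | leaf : OpTree
  | node : List OpTree → OpTree

variable (M : ℕ → Type)

mutual
/-- A treewise labelled tuple `(x_v)_{v ∈ V(t)} ∈ ∏_v M(r_v)`: the elements of
the treewise summand `F_t(M)` of the free operad `F(M)`. -/
inductive Lab : OpTree → Type
  | leaf : Lab .leaf
  | node (l : List OpTree) (x : M l.length) (ls : LabList l) : Lab (.node l)

/-- Labelled tuples on a list of subtrees. -/
inductive LabList : List OpTree → Type
  | nil : LabList []
  | cons {t : OpTree} {l : List OpTree} : Lab t → LabList l → LabList (t :: l)
end

variable (pt : M 1)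

mutual
/-- One-step reduction in the operadic James construction: deletion of a
unary vertex labelled by the basepoint `* ∈ M(1)` (merging its two adjacent
edges), anywhere in the tree. -/
inductive Step : (Σ t : OpTree, Lab M t) → (Σ t : OpTree, Lab M t) → Prop
  | del {t : OpTree} (lb : Lab M t) :
      Step ⟨.node [t], .node [t] pt (.cons lb .nil)⟩ ⟨t, lb⟩
  | node {l l' : List OpTree} {ls : LabList M l} {ls' : LabList M l'}
      (x : M l.length) (h : l.length = l'.length)
      (hs : StepList ⟨l, ls⟩ ⟨l', ls'⟩) :
      Step ⟨.node l, .node l x ls⟩ ⟨.node l', .node l' (h ▸ x) ls'⟩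

/-- One-step reduction inside a list of labelled subtrees. -/
inductive StepList : (Σ l : List OpTree, LabList M l) → (Σ l : List OpTree, LabList M l) → Prop
  | head {t t' : OpTree} {l : List OpTree} {lb : Lab M t} {lb' : Lab M t'}
      (h : Step ⟨t, lb⟩ ⟨t', lb'⟩) (rest : LabList M l) :
      StepList ⟨t :: l, .cons lb rest⟩ ⟨t' :: l, .cons lb' rest⟩
  | tail {t : OpTree} {l l' : List OpTree} {ls : LabList M l} {ls' : LabList M l'}
      (lb : Lab M t) (hs : StepList ⟨l, ls⟩ ⟨l', ls'⟩) :
      StepList ⟨t :: l, .cons lb ls⟩ ⟨t :: l', .cons lb ls'⟩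
end

mutual
/-- A treewise tuple is reduced when no unary vertex is labelled by the
basepoint. -/
def Reduced : ∀ {t : OpTree}, Lab M t → Prop
  | _, .leaf => True
  | _, .node l x ls => (∀ h : l.length = 1, h ▸ x ≠ pt) ∧ ReducedList ls

def ReducedList : ∀ {l : List OpTree}, LabList M l → Prop
  | _, .nil => True
  | _, .cons lb ls => Reduced lb ∧ ReducedList ls
end


/-! ### Auxiliary development -/

section Aux

variable {M : ℕ → Type} (pt : M 1)

open Classical in
/-- Build a node, collapsing it if it is unary with basepoint label. -/
noncomputable def mkNode : (l : List OpTree) → M l.length → LabList M l → Σ t', Lab M t'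
  | [t'], x, .cons lb .nil =>
      if x = pt then ⟨t', lb⟩ else ⟨.node [t'], .node [t'] x (.cons lb .nil)⟩
  | l, x, ls => ⟨.node l, .node l x ls⟩

open Classical in
theorem mkNode_single (t' : OpTree) (x : M [t'].length) (lb : Lab M t') :
    mkNode pt [t'] x (.cons lb .nil) =
      if x = pt then ⟨t', lb⟩ else ⟨.node [t'], .node [t'] x (.cons lb .nil)⟩ := rfl

mutual
noncomputable def norm : {t : OpTree} → Lab M t → Σ t', Lab M t'
  | _, .leaf => ⟨.leaf, .leaf⟩
  | _, .node _ x ls =>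
      mkNode pt (normList ls).1 ((normList ls).2.2.symm ▸ x) (normList ls).2.1

noncomputable def normList : {l : List OpTree} → LabList M l →
    Σ' (l' : List OpTree) (_ : LabList M l'), l'.length = l.length
  | _, .nil => ⟨[], .nil, rfl⟩
  | _, .cons lb ls =>
      ⟨(norm lb).1 :: (normList ls).1, .cons (norm lb).2 (normList ls).2.1,
        by simpa using (normList ls).2.2⟩
end

end Aux

section Aux2

variable {M : ℕ → Type} {pt : M 1}

theorem cast_heq' {a b : ℕ} (h : a = b) (x : M a) : HEq (h ▸ x : M b) x := by
  subst h; rfl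

theorem cast_irrel {a b : ℕ} (h h' : a = b) (x : M a) : (h ▸ x : M b) = h' ▸ x := rfl

theorem cast_comp {a b c : ℕ} (h1 : a = b) (h2 : b = c) (x : M a) :
    (h2 ▸ (h1 ▸ x : M b) : M c) = (h1.trans h2) ▸ x := by subst h1; subst h2; rfl

theorem mkNode_congr {l1 l2 : List OpTree} (hl : l1 = l2) {x1 : M l1.length}
    {x2 : M l2.length} (hx : HEq x1 x2) {ls1 : LabList M l1} {ls2 : LabList M l2}
    (hls : HEq ls1 ls2) : mkNode pt l1 x1 ls1 = mkNode pt l2 x2 ls2 := by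
  subst hl; rw [eq_of_heq hx, eq_of_heq hls]

theorem norm_node (l : List OpTree) (x : M l.length) (ls : LabList M l) :
    norm pt (.node l x ls) =
      mkNode pt (normList pt ls).1 ((normList pt ls).2.2.symm ▸ x) (normList pt ls).2.1 := rfl

theorem normList_cons {t : OpTree} {l : List OpTree} (lb : Lab M t) (ls : LabList M l) :
    normList pt (.cons lb ls) =
      ⟨(norm pt lb).1 :: (normList pt ls).1, .cons (norm pt lb).2 (normList pt ls).2.1,
        by simpa using (normList pt ls).2.2⟩ := rfl

/-- lengths are preserved by a list step -/
theorem stepList_length : ∀ {a b : Σ l : List OpTree, LabList M l},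
    StepList M pt a b → a.1.length = b.1.length
  | _, _, .head _ _ => rfl
  | _, _, .tail _ hs => by simpa using stepList_length hs

theorem stepListRTG_length {a b : Σ l : List OpTree, LabList M l}
    (h : Relation.ReflTransGen (StepList M pt) a b) : a.1.length = b.1.length := by
  induction h with
  | refl => rfl
  | tail _ hbc ih => exact ih.trans (stepList_length hbc)

end Aux2

section Aux3

variable {M : ℕ → Type} {pt : M 1}

open Relation

theorem liftNode {a b : Σ l : List OpTree, LabList M l}
    (hab : ReflTransGen (StepList M pt) a b) (x : M a.1.length) :
    ReflTransGen (Step M pt) ⟨.node a.1, .node a.1 x a.2⟩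
      ⟨.node b.1, .node b.1 (stepListRTG_length hab ▸ x) b.2⟩ := by
  induction hab with
  | refl => exact .refl
  | @tail b c hab hbc ih =>
      refine ih.tail ?_
      have := Step.node (M := M) (pt := pt) (ls := b.2) (ls' := c.2)
        (stepListRTG_length hab ▸ x) (stepList_length hbc) hbc
      simpa [cast_comp] using this

theorem liftHead {a b : Σ t : OpTree, Lab M t}
    (hab : ReflTransGen (Step M pt) a b) {l : List OpTree} (rest : LabList M l) :
    ReflTransGen (StepList M pt) ⟨a.1 :: l, .cons a.2 rest⟩ ⟨b.1 :: l, .cons b.2 rest⟩ := by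
  induction hab with
  | refl => exact .refl
  | tail _ hbc ih => exact ih.tail (StepList.head hbc rest)

theorem liftTail {a b : Σ l : List OpTree, LabList M l}
    (hab : ReflTransGen (StepList M pt) a b) {t : OpTree} (lb : Lab M t) :
    ReflTransGen (StepList M pt) ⟨t :: a.1, .cons lb a.2⟩ ⟨t :: b.1, .cons lb b.2⟩ := by
  induction hab with
  | refl => exact .refl
  | tail _ hbc ih => exact ih.tail (StepList.tail lb hbc)

theorem mkNode_reach (l : List OpTree) (x : M l.length) (ls : LabList M l) :
    ReflTransGen (Step M pt) ⟨.node l, .node l x ls⟩ (mkNode pt l x ls) := by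
  match l, x, ls with
  | [t'], x, .cons lb .nil =>
      by_cases h : x = pt
      · subst h
        simp only [mkNode_single, if_pos rfl]
        exact ReflTransGen.single (Step.del lb)
      · simp only [mkNode_single, if_neg h]
        exact .refl
  | [], x, .nil => exact .refl
  | t1 :: t2 :: r, x, ls => exact .refl

end Aux3

section Aux4

variable {M : ℕ → Type} {pt : M 1}

open Relation

mutual
theorem norm_reach : ∀ {t : OpTree} (lb : Lab M t),
    ReflTransGen (Step M pt) ⟨t, lb⟩ (norm pt lb)
  | _, .leaf => .refl
  | _, .node l x ls =>
      (liftNode (a := ⟨l, ls⟩) (normList_reach ls) x).trans (mkNode_reach _ _ _)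

theorem normList_reach : ∀ {l : List OpTree} (ls : LabList M l),
    ReflTransGen (StepList M pt) ⟨l, ls⟩ ⟨(normList pt ls).1, (normList pt ls).2.1⟩
  | _, .nil => .refl
  | _, .cons lb ls =>
      (liftHead (a := ⟨_, lb⟩) (norm_reach lb) ls).trans
        (liftTail (a := ⟨_, ls⟩) (normList_reach ls) (norm pt lb).2)
end

end Aux4

section Aux5

variable {M : ℕ → Type} {pt : M 1}

theorem sigma_inj {α : Type} {β : α → Type} {a a' : α} {b : β a} {b' : β a'}
    (h : (⟨a, b⟩ : Σ x, β x) = ⟨a', b'⟩) : a = a' ∧ HEq b b' := by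
  cases h; exact ⟨rfl, .rfl⟩

theorem sigma_ext {α : Type} {β : α → Type} {a a' : α} {b : β a} {b' : β a'}
    (h1 : a = a') (h2 : HEq b b') : (⟨a, b⟩ : Σ x, β x) = ⟨a', b'⟩ := by
  subst h1; rw [eq_of_heq h2]

theorem mkNode_reduced : ∀ (l : List OpTree) (x : M l.length) (ls : LabList M l),
    ReducedList M pt ls → Reduced M pt (mkNode pt l x ls).2 := by
  intro l x ls hls
  classical
  match l, x, ls with
  | [t'], x, .cons lb .nil =>
      by_cases h : x = pt
      · show Reduced M pt (if x = pt then (⟨t', lb⟩ : Σ t, Lab M t) else ⟨.node [t'], .node [t'] x (.cons lb .nil)⟩).2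
        rw [if_pos h]
        exact hls.1
      · show Reduced M pt (if x = pt then (⟨t', lb⟩ : Σ t, Lab M t) else ⟨.node [t'], .node [t'] x (.cons lb .nil)⟩).2
        rw [if_neg h]
        exact ⟨fun _ => h, hls⟩
  | [], x, .nil => exact ⟨fun h => by simp at h, hls⟩
  | t1 :: t2 :: r, x, ls => exact ⟨fun h => by simp at h, hls⟩

mutual
theorem norm_reduced : ∀ {t : OpTree} (lb : Lab M t), Reduced M pt (norm pt lb).2
  | _, .leaf => trivial
  | _, .node l x ls => mkNode_reduced _ _ _ (normList_reduced ls)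

theorem normList_reduced : ∀ {l : List OpTree} (ls : LabList M l),
    ReducedList M pt (normList pt ls).2.1
  | _, .nil => trivial
  | _, .cons lb ls => ⟨norm_reduced lb, normList_reduced ls⟩
end

theorem mkNode_eq_of_reduced : ∀ (l : List OpTree) (x : M l.length) (ls : LabList M l),
    Reduced M pt (.node l x ls) → mkNode pt l x ls = ⟨.node l, .node l x ls⟩ := by
  intro l x ls hred
  match l, x, ls with
  | [t'], x, .cons lb .nil =>
      simp only [mkNode_single, if_neg (hred.1 rfl)]
  | [], x, .nil => rfl
  | t1 :: t2 :: r, x, ls => rfl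

theorem cons_heq {t t' : OpTree} {l l' : List OpTree} (ht : t = t') (hl : l = l')
    {a : Lab M t} {a' : Lab M t'} {b : LabList M l} {b' : LabList M l'}
    (ha : HEq a a') (hb : HEq b b') :
    HEq (LabList.cons a b : LabList M (t :: l)) (LabList.cons a' b') := by
  subst ht; subst hl; rw [eq_of_heq ha, eq_of_heq hb]

mutual
theorem norm_fix : ∀ {t : OpTree} (lb : Lab M t), Reduced M pt lb →
    norm pt lb = ⟨t, lb⟩
  | _, .leaf, _ => rfl
  | _, .node l x ls, hred => by
      obtain ⟨h1, h2⟩ := sigma_inj (normList_fix ls hred.2)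
      rw [norm_node, mkNode_congr h1 (cast_heq' _ x) h2]
      exact mkNode_eq_of_reduced _ _ _ hred

theorem normList_fix : ∀ {l : List OpTree} (ls : LabList M l), ReducedList M pt ls →
    (⟨(normList pt ls).1, (normList pt ls).2.1⟩ : Σ l, LabList M l) = ⟨l, ls⟩
  | _, .nil, _ => rfl
  | _, .cons lb ls, hred => by
      obtain ⟨h1, h2⟩ := sigma_inj (norm_fix lb hred.1)
      obtain ⟨h3, h4⟩ := sigma_inj (normList_fix ls hred.2)
      rw [normList_cons]
      refine sigma_ext ?_ (cons_heq h1 h3 h2 h4)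
      show (norm pt lb).1 :: (normList pt ls).1 = _
      rw [h1, h3]
end

end Aux5

section Aux6

variable {M : ℕ → Type} {pt : M 1}

mutual
theorem norm_step : ∀ {a b : Σ t : OpTree, Lab M t}, Step M pt a b →
    norm pt a.2 = norm pt b.2
  | _, _, .del lb => by
      show mkNode pt [(norm pt lb).1] pt (.cons (norm pt lb).2 .nil) = norm pt lb
      simp [mkNode_single]
  | _, _, .node x h hs => by
      obtain ⟨h1, h2⟩ := sigma_inj (norm_stepList hs)
      exact mkNode_congr h1
        ((cast_heq' _ x).trans ((cast_heq' _ _).trans (cast_heq' h x)).symm) h2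

theorem norm_stepList : ∀ {a b : Σ l : List OpTree, LabList M l}, StepList M pt a b →
    (⟨(normList pt a.2).1, (normList pt a.2).2.1⟩ : Σ l, LabList M l) =
      ⟨(normList pt b.2).1, (normList pt b.2).2.1⟩
  | _, _, .head hstep rest => by
      obtain ⟨h1, h2⟩ := sigma_inj (norm_step hstep)
      refine sigma_ext ?_ (cons_heq h1 rfl h2 HEq.rfl)
      show _ :: (normList pt rest).1 = _ :: (normList pt rest).1
      rw [h1]
  | _, _, .tail lb hs => by
      obtain ⟨h1, h2⟩ := sigma_inj (norm_stepList hs)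
      refine sigma_ext ?_ (cons_heq rfl h1 HEq.rfl h2)
      show _ :: _ = _ :: _
      rw [h1]
end

theorem eqv_norm {a b : Σ t : OpTree, Lab M t} (h : Relation.EqvGen (Step M pt) a b) :
    norm pt a.2 = norm pt b.2 := by
  induction h with
  | rel _ _ h => exact norm_step h
  | refl => rfl
  | symm _ _ _ ih => exact ih.symm
  | trans _ _ _ _ _ ih1 ih2 => exact ih1.trans ih2

theorem rtg_eqv {α : Type*} {r : α → α → Prop} {a b : α}
    (h : Relation.ReflTransGen r a b) : Relation.EqvGen r a b := by
  induction h with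
  | refl => exact .refl a
  | tail _ hbc ih => exact .trans _ _ _ ih (.rel _ _ hbc)

end Aux6

/-- every element of the operadic James construction `F_*(M)`
(i.e., every equivalence class of treewise labelled tuples under the
equivalence relation generated by deletion of unary vertices labelled by the
basepoint) contains a unique reduced representative. -/
theorem james_unique_reduced_representative (x : Σ t : OpTree, Lab M t) :
    ∃! y : Σ t : OpTree, Lab M t,
      Relation.EqvGen (Step M pt) x y ∧ Reduced M pt y.2 := by
  refine ⟨norm pt x.2, ⟨rtg_eqv (norm_reach x.2), norm_reduced x.2⟩, ?_⟩
  rintro y ⟨hy, hyr⟩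
  exact ((eqv_norm hy).trans (norm_fix y.2 hyr)).symm
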